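/- There exists a constant c > 0 such that the following holds. Let D be a positive integer, M ⊆ ℝ^D, p ∈ M, and let T and H be linear subspaces of ℝ^D of the same dimension d. Let τ > 0 and α ∈ [0, π/4]. Assume: (i) for every unit vector ν ∈ T^⊥ the open ball of radius τ centered at p + τ·ν is disjoint from M; (ii) for every unit vector u ∈ T, dist(u, H) ≤ sin α, and for every unit vector w ∈ H, dist(w, T) ≤ sin α. Then for every x ∈ H and y ∈ H^⊥ such that p + x + y ∈ M, ‖x‖ ≤ τ/8, and ‖y‖ ≤ τ/2, one has ‖y‖ ≤ ‖x‖·(tan α + c·‖x‖/τ). -/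

import Mathlib

/-!
Write `P` for the orthogonal projection onto `Tᗮ` and `v = x + y`. Testing the reach condition
against the unit normal `P v / ‖P v‖` gives `2τ ‖P v‖ ≤ ‖v‖² = ‖x‖² + ‖y‖²`. The angle condition
gives `‖P x‖ ≤ sin α ‖x‖` for `x ∈ H` and `‖(1 - P) y‖ ≤ sin α ‖y‖`, hence `‖P y‖ ≥ cos α ‖y‖`,
for `y ∈ Hᗮ`. Since `P y = P v - P x`, this yields
`2τ cos α ‖y‖ ≤ ‖x‖² + ‖y‖² + 2τ sin α ‖x‖`, and the size restrictions on `x` and `y` turn this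
into the claimed bound with `c = 5`.
-/

open scoped RealInnerProductSpace

open Metric Real

namespace Submodule

variable {E : Type*} [NormedAddCommGroup E] [InnerProductSpace ℝ E]
  (K : Submodule ℝ E) [K.HasOrthogonalProjection]

theorem infDist_eq_norm_starProjection_orthogonal (v : E) :
    infDist v K = ‖Kᗮ.starProjection v‖ := by
  rw [infDist_eq_iInf, starProjection_orthogonal_val, starProjection_minimal]
  simp only [dist_eq_norm]
  rfl

theorem real_inner_starProjection_self (v : E) :
    ⟪v, K.starProjection v⟫ = ‖K.starProjection v‖ ^ 2 := by
  rw [← real_inner_self_eq_norm_sq, inner_starProjection_left_eq_right,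
    K.starProjection_eq_self_iff.2 (K.starProjection_apply_mem v)]

theorem norm_starProjection_orthogonal_le_of_infDist_le {U : Submodule ℝ E} {s : ℝ} (hs : 0 ≤ s)
    (h : ∀ u ∈ U, ‖u‖ = 1 → infDist u K ≤ s) {u : E} (hu : u ∈ U) :
    ‖Kᗮ.starProjection u‖ ≤ s * ‖u‖ := by
  have hnorm : ‖Kᗮ.starProjection ∘L U.subtypeL‖ ≤ s :=
    ContinuousLinearMap.opNorm_le_of_unit_norm hs fun u hu1 => by
      simpa [infDist_eq_norm_starProjection_orthogonal] using h u u.2 hu1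
  simpa using (Kᗮ.starProjection ∘L U.subtypeL).le_of_opNorm_le hnorm ⟨u, hu⟩

theorem norm_starProjection_le_of_mem_orthogonal {U : Submodule ℝ E} [U.HasOrthogonalProjection]
    {s : ℝ} (hs : 0 ≤ s) (h : ∀ u ∈ K, ‖u‖ = 1 → infDist u U ≤ s) {y : E} (hy : y ∈ Uᗮ) :
    ‖K.starProjection y‖ ≤ s * ‖y‖ := by
  set z := K.starProjection y
  have hz : ‖Uᗮ.starProjection z‖ ≤ s * ‖z‖ :=
    U.norm_starProjection_orthogonal_le_of_infDist_le hs h (K.starProjection_apply_mem y)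
  have hsq : ‖z‖ ^ 2 ≤ s * ‖y‖ * ‖z‖ :=
    calc ‖z‖ ^ 2 = ⟪y, z⟫ := (K.real_inner_starProjection_self y).symm
      _ = ⟪y, Uᗮ.starProjection z⟫ := by
        rw [← Uᗮ.inner_starProjection_left_eq_right, Uᗮ.starProjection_eq_self_iff.2 hy]
      _ ≤ ‖y‖ * (s * ‖z‖) :=
        (real_inner_le_norm _ _).trans (mul_le_mul_of_nonneg_left hz (norm_nonneg y))
      _ = s * ‖y‖ * ‖z‖ := by ring
  nlinarith [norm_nonneg z, mul_nonneg hs (norm_nonneg y)]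

theorem mul_cos_le_norm_starProjection_orthogonal {α : ℝ} (hα : 0 ≤ cos α) {y : E}
    (h : ‖K.starProjection y‖ ≤ sin α * ‖y‖) :
    cos α * ‖y‖ ≤ ‖Kᗮ.starProjection y‖ := by
  have hpyth := K.norm_sq_eq_add_norm_sq_starProjection y
  have hsq : (cos α * ‖y‖) ^ 2 ≤ ‖Kᗮ.starProjection y‖ ^ 2 := by
    have := pow_le_pow_left₀ (norm_nonneg _) h 2
    nlinarith [sin_sq_add_cos_sq α]
  exact (pow_le_pow_iff_left₀ (by positivity) (norm_nonneg _) two_ne_zero).1 hsq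

end Submodule

section Reach

variable {E : Type*} [NormedAddCommGroup E] [InnerProductSpace ℝ E]

theorem two_mul_inner_le_norm_sq_of_notMem_ball {v ν : E} {τ : ℝ} (hτ : 0 ≤ τ) (hν : ‖ν‖ = 1)
    (hv : v ∉ ball (τ • ν) τ) : 2 * τ * ⟪v, ν⟫ ≤ ‖v‖ ^ 2 := by
  rw [mem_ball, dist_eq_norm, not_lt] at hv
  have hexp : ‖v - τ • ν‖ ^ 2 = ‖v‖ ^ 2 - 2 * τ * ⟪v, ν⟫ + τ ^ 2 := by
    rw [norm_sub_sq_real, real_inner_smul_right, norm_smul, Real.norm_eq_abs, hν, mul_one, sq_abs]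
    ring
  nlinarith [pow_le_pow_left₀ hτ hv 2]

theorem two_mul_norm_starProjection_sub_le (N : Submodule ℝ E) [N.HasOrthogonalProjection]
    {M : Set E} {p q : E} {τ : ℝ} (hτ : 0 ≤ τ)
    (hM : ∀ ν ∈ N, ‖ν‖ = 1 → Disjoint (ball (p + τ • ν) τ) M) (hq : q ∈ M) :
    2 * τ * ‖N.starProjection (q - p)‖ ≤ ‖q - p‖ ^ 2 := by
  set w := N.starProjection (q - p)
  rcases eq_or_ne w 0 with hw | hw
  · rw [hw, norm_zero, mul_zero]
    positivity
  have hwpos : 0 < ‖w‖ := norm_pos_iff.2 hw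
  set ν := ‖w‖⁻¹ • w
  have hν : ‖ν‖ = 1 := by rw [norm_smul, norm_inv, norm_norm, inv_mul_cancel₀ hwpos.ne']
  have hinner : ⟪q - p, ν⟫ = ‖w‖ := by
    rw [real_inner_smul_right, N.real_inner_starProjection_self, sq, ← mul_assoc,
      inv_mul_cancel₀ hwpos.ne', one_mul]
  have hnot : q - p ∉ ball (τ • ν) τ := fun hball =>
    Set.disjoint_left.1 (hM ν (N.smul_mem _ (N.starProjection_apply_mem _)) hν)
      (by simpa [mem_ball, dist_eq_norm, sub_sub, add_comm] using hball) hq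
  simpa [hinner] using two_mul_inner_le_norm_sq_of_notMem_ball hτ hν hnot

end Reach

theorem le_mul_tan_add_of_two_mul_cos_le {a b τ α : ℝ} (hτ : 0 < τ) (hα₀ : 0 ≤ α)
    (hα : α ≤ π / 4) (ha₀ : 0 ≤ a) (hb₀ : 0 ≤ b) (ha : a ≤ τ / 8) (hb : b ≤ τ / 2)
    (h : 2 * τ * (cos α * b) ≤ a ^ 2 + b ^ 2 + 2 * τ * (sin α * a)) :
    b ≤ a * (tan α + 5 * a / τ) := by
  have hcos : √2 / 2 ≤ cos α := by
    rw [← cos_pi_div_four]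
    exact cos_le_cos_of_nonneg_of_le_pi hα₀ (by linarith [pi_gt_three]) hα
  have hsqrt2 : (1.414 : ℝ) ≤ √2 := by
    nlinarith [sq_sqrt (show (0 : ℝ) ≤ 2 by norm_num), sqrt_nonneg 2]
  have hcos₀ : 0 < cos α := by linarith
  -- A crude linear bound `b ≲ a` turns the quadratic term `b ^ 2` into `O(a ^ 2)`.
  have hba : b ≤ 12 / 5 * a := by
    nlinarith [mul_nonneg hb₀ (sub_nonneg.2 hb), mul_nonneg ha₀ (sub_nonneg.2 ha),
      mul_nonneg (mul_nonneg hb₀ hτ.le) (sub_nonneg.2 hcos), sin_le_one α]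
  have hkey : b * (cos α * τ) ≤ a * sin α * τ + 5 * a ^ 2 * cos α := by
    nlinarith [mul_le_mul hba hba hb₀ (by positivity : (0 : ℝ) ≤ 12 / 5 * a),
      mul_nonneg (mul_nonneg ha₀ ha₀) (sub_nonneg.2 hcos)]
  have hrhs : a * (tan α + 5 * a / τ) = (a * sin α * τ + 5 * a ^ 2 * cos α) / (cos α * τ) := by
    rw [tan_eq_sin_div_cos]
    field_simp
  rw [hrhs, le_div_iff₀ (by positivity)]
  exact hkey

/-- **Simplified tilted-plane bound.** There exists a universal constant `c > 0` such that,
under the reach and principal-angle hypotheses, `‖y‖ ≤ ‖x‖·(tan α + c‖x‖/τ)`. -/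
theorem stmt_2 : ∃ c : ℝ, 0 < c ∧
    ∀ (D : ℕ), 0 < D →
    ∀ (M : Set (EuclideanSpace ℝ (Fin D))) (p : EuclideanSpace ℝ (Fin D)), p ∈ M →
    ∀ (T H : Submodule ℝ (EuclideanSpace ℝ (Fin D))) (d : ℕ),
      Module.finrank ℝ T = d → Module.finrank ℝ H = d →
    ∀ (τ α : ℝ), 0 < τ → 0 ≤ α → α ≤ Real.pi / 4 →
    (∀ ν ∈ Tᗮ, ‖ν‖ = 1 → Disjoint (Metric.ball (p + τ • ν) τ) M) →
    (∀ u ∈ T, ‖u‖ = 1 →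
      Metric.infDist u (H : Set (EuclideanSpace ℝ (Fin D))) ≤ Real.sin α) →
    (∀ w ∈ H, ‖w‖ = 1 →
      Metric.infDist w (T : Set (EuclideanSpace ℝ (Fin D))) ≤ Real.sin α) →
    ∀ x ∈ H, ∀ y ∈ Hᗮ, p + x + y ∈ M → ‖x‖ ≤ τ / 8 → ‖y‖ ≤ τ / 2 →
      ‖y‖ ≤ ‖x‖ * (Real.tan α + c * ‖x‖ / τ) := by
  refine ⟨5, by norm_num, ?_⟩
  intro D _ M p _ T H d _ _ τ α hτ hα₀ hα hreach hTH hHT x hx y hy hq hxτ hyτ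
  have hsin : 0 ≤ sin α := sin_nonneg_of_nonneg_of_le_pi hα₀ (by linarith [pi_pos])
  have hcos : 0 ≤ cos α := cos_nonneg_of_mem_Icc ⟨by linarith [pi_pos], by linarith [pi_pos]⟩
  have hcurv : 2 * τ * ‖Tᗮ.starProjection (x + y)‖ ≤ ‖x‖ ^ 2 + ‖y‖ ^ 2 := by
    have := two_mul_norm_starProjection_sub_le Tᗮ hτ.le hreach hq
    rwa [add_assoc, add_sub_cancel_left, norm_add_sq_real, hy x hx, mul_zero, add_zero] at this
  have htilt_x := T.norm_starProjection_orthogonal_le_of_infDist_le hsin hHT hx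
  have htilt_y := T.mul_cos_le_norm_starProjection_orthogonal hcos
    (T.norm_starProjection_le_of_mem_orthogonal hsin hTH hy)
  have htri : ‖Tᗮ.starProjection y‖ ≤ ‖Tᗮ.starProjection (x + y)‖ + ‖Tᗮ.starProjection x‖ := by
    simpa [map_add] using norm_sub_le (Tᗮ.starProjection (x + y)) (Tᗮ.starProjection x)
  refine le_mul_tan_add_of_two_mul_cos_le hτ hα₀ hα (norm_nonneg x) (norm_nonneg y) hxτ hyτ ?_
  nlinarith
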